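/- arXiv:1604.05939 — 3 statements merged into one kernel-verified Lean document; each statement's English description precedes it below -/
import Mathlib

section
/- Let G and O be groups, φ : G → Aut(O) a homomorphism, and let P be a subgroup of G ⋉ O such that the projection proj₁ : G ⋉ O → G is injective on P. Let Z = (G ⋉ O)/P be the set of left cosets with the left translation action of G ⋉ O, and let Z_O be the set of O-orbits of Z with its induced G-action. Then the G-fixed point set (Z_O)^G contains at most one element, and it is non-empty if and only if proj₁ maps P onto G. -/
open SemidirectProduct QuotientGroup

private lemma key_aux {G O : Type*} [Group G] [Group O] (φ : G →* MulAut O)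
    (P : Subgroup (O ⋊[φ] G)) (z : (O ⋊[φ] G) ⧸ P)
    (hz : ∀ g : G, ∃ A : O, (SemidirectProduct.inr g : O ⋊[φ] G) • z =
          (SemidirectProduct.inl A : O ⋊[φ] G) • z) :
    ∀ g : G, ∃ p ∈ P, SemidirectProduct.rightHom p = g := by
  intro g
  obtain ⟨x, rfl⟩ := QuotientGroup.mk_surjective z
  set h : G := SemidirectProduct.rightHom x with hh
  obtain ⟨A, hA⟩ := hz (h * g⁻¹ * h⁻¹)
  have hA' : QuotientGroup.mk ((inr (h * g⁻¹ * h⁻¹) : O ⋊[φ] G) * x) =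
      QuotientGroup.mk ((inl A : O ⋊[φ] G) * x) := hA
  have hmem : ((inr (h * g⁻¹ * h⁻¹) : O ⋊[φ] G) * x)⁻¹ * ((inl A : O ⋊[φ] G) * x) ∈ P :=
    QuotientGroup.eq.mp hA'
  refine ⟨_, hmem, ?_⟩
  simp [hh]


/-- Let `P` be a subgroup of `G ⋉ O` on which the projection to
`G` is injective, and let `Z = (G ⋉ O)/P` with the left translation action.  Then
the set of `G`-fixed points of the `O`-orbit set `Z_O` has at most one element
(any two `G`-fixed `O`-orbits agree), and it is nonempty if and only if the
projection maps `P` onto `G`. -/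
theorem stmt2 {G O : Type*} [Group G] [Group O] (φ : G →* MulAut O)
    (P : Subgroup (O ⋊[φ] G))
    (hinj : Set.InjOn (⇑(SemidirectProduct.rightHom : O ⋊[φ] G →* G))
      (P : Set (O ⋊[φ] G))) :
    (∀ z z' : (O ⋊[φ] G) ⧸ P,
      (∀ g : G, ∃ A : O, (SemidirectProduct.inr g : O ⋊[φ] G) • z =
          (SemidirectProduct.inl A : O ⋊[φ] G) • z) →
      (∀ g : G, ∃ A : O, (SemidirectProduct.inr g : O ⋊[φ] G) • z' =
          (SemidirectProduct.inl A : O ⋊[φ] G) • z') →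
      ∃ A : O, (SemidirectProduct.inl A : O ⋊[φ] G) • z = z') ∧
    ((∃ z : (O ⋊[φ] G) ⧸ P, ∀ g : G, ∃ A : O,
        (SemidirectProduct.inr g : O ⋊[φ] G) • z =
          (SemidirectProduct.inl A : O ⋊[φ] G) • z) ↔
      ∀ g : G, ∃ p ∈ P, SemidirectProduct.rightHom p = g) := by
  constructor
  · intro z z' hz hz'
    obtain ⟨x, rfl⟩ := QuotientGroup.mk_surjective z
    obtain ⟨y, rfl⟩ := QuotientGroup.mk_surjective z'
    obtain ⟨p, hp, hpg⟩ := key_aux φ P _ hz (SemidirectProduct.rightHom (x⁻¹ * y))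
    have hc : x * p * y⁻¹ ∈ (SemidirectProduct.rightHom : O ⋊[φ] G →* G).ker := by
      simp [MonoidHom.mem_ker, hpg, map_mul]

    rw [← SemidirectProduct.range_inl_eq_ker_rightHom] at hc
    obtain ⟨C, hC⟩ := hc
    refine ⟨C⁻¹, ?_⟩
    show QuotientGroup.mk ((inl C⁻¹ : O ⋊[φ] G) * x) = QuotientGroup.mk y
    rw [QuotientGroup.eq]
    have : ((inl C⁻¹ : O ⋊[φ] G) * x)⁻¹ * y = x⁻¹ * (x * p * y⁻¹) * y := by
      rw [← hC]; simp [mul_assoc]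
    rw [this]
    simpa [mul_assoc] using hp
  · constructor
    · rintro ⟨z, hz⟩ g
      exact key_aux φ P z hz g
    · intro hsurj
      refine ⟨QuotientGroup.mk 1, fun g => ?_⟩
      obtain ⟨p, hp, hpg⟩ := hsurj g
      refine ⟨p.left⁻¹, ?_⟩
      show QuotientGroup.mk ((inr g : O ⋊[φ] G) * 1) = QuotientGroup.mk ((inl p.left⁻¹ : O ⋊[φ] G) * 1)
      rw [QuotientGroup.eq]
      have : ((inr g : O ⋊[φ] G) * 1)⁻¹ * ((inl p.left⁻¹ : O ⋊[φ] G) * 1) = p⁻¹ := by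
        have h2 : ((inr g : O ⋊[φ] G) * 1)⁻¹ * ((inl p.left⁻¹ : O ⋊[φ] G) * 1) =
            ((inl p.left : O ⋊[φ] G) * inr g)⁻¹ := by
          simp [mul_inv_rev]
        rw [h2, ← hpg]
        rw [show SemidirectProduct.rightHom p = p.right from rfl,
          SemidirectProduct.inl_left_mul_inr_right p]
      rw [this]
      exact P.inv_mem hp
end

section
/- Let G be a group acting freely on a set X, let Q be a group and φ : G → Q a homomorphism. Let O be the group of functions X → Q under pointwise multiplication, with G acting on O by automorphisms via (ψ(g)·A)(x) = φ(g)·A(g⁻¹·x)·φ(g)⁻¹, and form the semidirect product G ⋉ O with respect to ψ. Then for every subgroup P of G ⋉ O such that proj₁ restricts to a bijection from P onto G, there exists B ∈ O such that conjugation by the element (B,1) carries P onto the canonical copy { (1,g) | g ∈ G } of G in G ⋉ O; in particular, proj₁ restricts to an isomorphism P ≅ G if and only if P is conjugate in G ⋉ O to the canonical copy of G. -/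
/-- Let `G` act freely on a set `X`, let `φ : G →* Q`, and let
`G` act on `O = X → Q` by `(ψ g A) x = φ g * A (g⁻¹ • x) * (φ g)⁻¹`.  Then every
subgroup `P` of `G ⋉ O` on which the projection restricts to a bijection onto `G`
is carried onto the canonical copy of `G` by conjugation with some `(B, 1)`, `B : O`;
in particular the projection restricts to an isomorphism `P ≅ G` iff `P` is conjugate
in `G ⋉ O` to the canonical copy of `G`. -/
theorem stmt4 {G Q X : Type*} [Group G] [Group Q] [MulAction G X]
    (hfree : ∀ (g : G) (x : X), g • x = x → g = 1)
    (φ : G →* Q) (ψ : G →* MulAut (X → Q))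
    (hψ : ∀ (g : G) (A : X → Q) (x : X), ψ g A x = φ g * A (g⁻¹ • x) * (φ g)⁻¹) :
    (∀ P : Subgroup ((X → Q) ⋊[ψ] G),
      Set.BijOn (⇑(SemidirectProduct.rightHom : (X → Q) ⋊[ψ] G →* G))
        (P : Set ((X → Q) ⋊[ψ] G)) Set.univ →
      ∃ B : X → Q,
        (fun p => (SemidirectProduct.inl B : (X → Q) ⋊[ψ] G) * p *
            (SemidirectProduct.inl B : (X → Q) ⋊[ψ] G)⁻¹) '' (P : Set ((X → Q) ⋊[ψ] G)) =
          ((SemidirectProduct.inr : G →* (X → Q) ⋊[ψ] G).range :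
            Set ((X → Q) ⋊[ψ] G))) ∧
    (∀ P : Subgroup ((X → Q) ⋊[ψ] G),
      Set.BijOn (⇑(SemidirectProduct.rightHom : (X → Q) ⋊[ψ] G →* G))
        (P : Set ((X → Q) ⋊[ψ] G)) Set.univ ↔
      ∃ s : (X → Q) ⋊[ψ] G,
        (fun p => s * p * s⁻¹) '' (P : Set ((X → Q) ⋊[ψ] G)) =
          ((SemidirectProduct.inr : G →* (X → Q) ⋊[ψ] G).range :
            Set ((X → Q) ⋊[ψ] G))) := by
  classical
  -- uniqueness from freeness
  have hfree' : ∀ (g g' : G) (y : X), g • y = g' • y → g = g' := by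
    intro g g' y h
    have : (g'⁻¹ * g) • y = y := by rw [mul_smul, h, inv_smul_smul]
    exact (inv_mul_eq_one.mp (hfree _ _ this)).symm
  have main : ∀ P : Subgroup ((X → Q) ⋊[ψ] G),
      Set.BijOn (⇑(SemidirectProduct.rightHom : (X → Q) ⋊[ψ] G →* G))
        (P : Set ((X → Q) ⋊[ψ] G)) Set.univ →
      ∃ B : X → Q,
        (fun p => (SemidirectProduct.inl B : (X → Q) ⋊[ψ] G) * p *
            (SemidirectProduct.inl B : (X → Q) ⋊[ψ] G)⁻¹) '' (P : Set ((X → Q) ⋊[ψ] G)) =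
          ((SemidirectProduct.inr : G →* (X → Q) ⋊[ψ] G).range :
            Set ((X → Q) ⋊[ψ] G)) := by
    intro P hbij
    -- section of rightHom on P
    have hsec : ∀ g : G, ∃ p : (X → Q) ⋊[ψ] G, p ∈ P ∧ p.right = g := by
      intro g
      obtain ⟨p, hp, hpg⟩ := hbij.surjOn (Set.mem_univ g)
      exact ⟨p, hp, hpg⟩
    choose p hpP hpr using hsec
    have huniq : ∀ (g : G) (q : (X → Q) ⋊[ψ] G), q ∈ P → q.right = g → q = p g := by
      intro g q hq hqg
      exact hbij.injOn hq (hpP g)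
        (by rw [SemidirectProduct.rightHom_eq_right]; exact hqg.trans (hpr g).symm)
    set A : G → X → Q := fun g => (p g).left with hA
    have hco : ∀ g h : G, A (g * h) = A g * ψ g (A h) := by
      intro g h
      have h1 : p g * p h = p (g * h) := by
        refine huniq _ _ (mul_mem (hpP g) (hpP h)) ?_
        rw [SemidirectProduct.mul_right, hpr, hpr]
      have := congrArg SemidirectProduct.left h1
      rw [SemidirectProduct.mul_left, hpr] at this
      exact this.symm
    -- orbit representatives
    set rep : X → X := fun x => (Quotient.mk (MulAction.orbitRel G X) x).out with hrep
    have hrepo : ∀ x : X, ∃ g : G, g • rep x = x := by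
      intro x
      have h1 : (MulAction.orbitRel G X) (rep x) x := Quotient.mk_out x
      rw [MulAction.orbitRel_apply, MulAction.mem_orbit_iff] at h1
      obtain ⟨g, hg⟩ := h1
      exact ⟨g⁻¹, by rw [← hg, inv_smul_smul]⟩
    choose gx hgx using hrepo
    have hrep_smul : ∀ (g : G) (x : X), rep (g • x) = rep x := by
      intro g x
      have : (Quotient.mk (MulAction.orbitRel G X) (g • x)) =
          Quotient.mk (MulAction.orbitRel G X) x := by
        exact Quotient.sound (MulAction.orbitRel_apply.mpr (MulAction.mem_orbit x g))
      simp only [hrep, this]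
    set B : X → Q := fun x => (A (gx x) x)⁻¹ with hB
    have key : ∀ (g : G) (x : X), B (g • x) * A g (g • x) = φ g * B x * (φ g)⁻¹ := by
      intro g x
      have hgx2 : gx (g • x) = g * gx x := by
        apply hfree' _ _ (rep x)
        have h1 : gx (g • x) • rep (g • x) = g • x := hgx (g • x)
        rw [hrep_smul] at h1
        rw [h1, mul_smul, hgx]
      have hAval : A (gx (g • x)) (g • x) =
          A g (g • x) * (φ g * A (gx x) x * (φ g)⁻¹) := by
        rw [hgx2, hco]
        simp only [Pi.mul_apply]
        rw [hψ, inv_smul_smul]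
      simp only [hB, hAval]
      group
    have conjeq : ∀ g : G,
        (SemidirectProduct.inl B : (X → Q) ⋊[ψ] G) * p g *
          (SemidirectProduct.inl B : (X → Q) ⋊[ψ] G)⁻¹ = SemidirectProduct.inr g := by
      intro g
      have hBz : B * A g * ψ g B⁻¹ = 1 := by
        funext x
        have h1 : (ψ g B⁻¹) x = φ g * (B (g⁻¹ • x))⁻¹ * (φ g)⁻¹ := by
          rw [hψ]; simp
        have h2 : B x * A g x = φ g * B (g⁻¹ • x) * (φ g)⁻¹ := by
          have := key g (g⁻¹ • x)
          rwa [smul_inv_smul] at this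
        simp only [Pi.mul_apply, Pi.one_apply, h1, h2]
        group
      have hpg : p g = SemidirectProduct.inl (A g) * SemidirectProduct.inr g := by
        conv_lhs => rw [← SemidirectProduct.inl_left_mul_inr_right (p g)]
        rw [hpr]
      have haut : (SemidirectProduct.inr g : (X → Q) ⋊[ψ] G) * SemidirectProduct.inl B⁻¹ =
          SemidirectProduct.inl (ψ g B⁻¹) * SemidirectProduct.inr g := by
        rw [SemidirectProduct.inl_aut,
          show (SemidirectProduct.inr g⁻¹ : (X → Q) ⋊[ψ] G) = (SemidirectProduct.inr g)⁻¹ from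
            map_inv _ _]
        group
      calc (SemidirectProduct.inl B : (X → Q) ⋊[ψ] G) * p g * (SemidirectProduct.inl B)⁻¹
          = SemidirectProduct.inl B * SemidirectProduct.inl (A g) *
            (SemidirectProduct.inr g * SemidirectProduct.inl B⁻¹) := by
            rw [hpg, ← map_inv SemidirectProduct.inl]; group
        _ = SemidirectProduct.inl B * SemidirectProduct.inl (A g) *
            (SemidirectProduct.inl (ψ g B⁻¹) * SemidirectProduct.inr g) := by rw [haut]
        _ = SemidirectProduct.inl (B * A g * ψ g B⁻¹) * SemidirectProduct.inr g := by
            rw [map_mul, map_mul]; group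
        _ = SemidirectProduct.inr g := by rw [hBz, map_one, one_mul]
    refine ⟨B, ?_⟩
    apply Set.Subset.antisymm
    · rintro _ ⟨r, hr, rfl⟩
      show (SemidirectProduct.inl B : (X → Q) ⋊[ψ] G) * r * (SemidirectProduct.inl B)⁻¹ ∈ _
      have hr2 : r = p r.right := huniq _ _ hr rfl
      rw [hr2, conjeq]
      exact ⟨r.right, rfl⟩
    · rintro _ ⟨g, rfl⟩
      exact ⟨p g, hpP g, conjeq g⟩
  refine ⟨main, fun P => ⟨fun hbij => ?_, fun hconj => ?_⟩⟩
  · obtain ⟨B, hB⟩ := main P hbij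
    exact ⟨SemidirectProduct.inl B, hB⟩
  · obtain ⟨s, hs⟩ := hconj
    constructor
    · exact fun _ _ => Set.mem_univ _
    constructor
    · intro q hq q' hq' hrh
      have hmem : s * q * s⁻¹ ∈ ((SemidirectProduct.inr : G →* (X → Q) ⋊[ψ] G).range :
          Set ((X → Q) ⋊[ψ] G)) := by rw [← hs]; exact ⟨q, hq, rfl⟩
      have hmem' : s * q' * s⁻¹ ∈ ((SemidirectProduct.inr : G →* (X → Q) ⋊[ψ] G).range :
          Set ((X → Q) ⋊[ψ] G)) := by rw [← hs]; exact ⟨q', hq', rfl⟩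
      obtain ⟨a, ha⟩ := hmem
      obtain ⟨b, hb⟩ := hmem'
      have hab : a = b := by
        have h1 := congrArg SemidirectProduct.rightHom ha
        have h2 := congrArg SemidirectProduct.rightHom hb
        simp only [map_mul, map_inv, SemidirectProduct.rightHom_inr] at h1 h2
        rw [h1, h2, hrh]
      have : s * q * s⁻¹ = s * q' * s⁻¹ := by rw [← ha, ← hb, hab]
      exact mul_left_cancel (mul_right_cancel this)
    · intro g _
      have hmem : (SemidirectProduct.inr (SemidirectProduct.rightHom s * g *
          (SemidirectProduct.rightHom s)⁻¹) : (X → Q) ⋊[ψ] G) ∈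
          ((SemidirectProduct.inr : G →* (X → Q) ⋊[ψ] G).range :
            Set ((X → Q) ⋊[ψ] G)) := ⟨_, rfl⟩
      rw [← hs] at hmem
      obtain ⟨q, hq, hq2⟩ := hmem
      refine ⟨q, hq, ?_⟩
      have h1 := congrArg SemidirectProduct.rightHom hq2
      simp only [map_mul, map_inv, SemidirectProduct.rightHom_inr] at h1
      have := mul_left_cancel (mul_right_cancel h1)
      exact this
end

section
/- Let (C, ⊗) be a closed symmetric monoidal category with pushouts. Given two pushout squares, one with horizontal maps g_b : A_b → X_b and g_f : A_f → X_f and vertical maps A_b → A_f, X_b → X_f, and one with horizontal maps h_b : B_b → Y_b and h_f : B_f → Y_f and vertical maps B_b → B_f, Y_b → Y_f, the row-wise pushout-product square, with horizontal maps the pushout products g_b □ h_b : (A_b ⊗ Y_b) ⊔_{A_b ⊗ B_b} (X_b ⊗ B_b) → X_b ⊗ Y_b and g_f □ h_f : (A_f ⊗ Y_f) ⊔_{A_f ⊗ B_f} (X_f ⊗ B_f) → X_f ⊗ Y_f, and with vertical maps induced by functoriality, is again a pushout square. -/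
/-!
The square factors vertically through `gf □ hb`, so it suffices to change one variable at a time;
this works for the Leibniz construction of any bifunctor `F`, the second variable of `F` being the
first variable of `F.flip`. Let `a, b` be a pushout square from `f₁` to `f₁'` that stays a pushout
under `F(-, X₂)` and `F(-, Y₂)` (for `⊗` in a closed symmetric category, `- ⊗ Z` and `Z ⊗ -` are
left adjoints). Pasting its image at `X₂` with the square defining the Leibniz pushout of
`(f₁', f₂)` shows that the induced map between Leibniz pushouts is a pushout of `F(a, Y₂)`.
Pasting that square with the square of Leibniz maps gives the image at `Y₂`, which is a pushout,
so the square of Leibniz maps is one too.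
-/

open CategoryTheory CategoryTheory.Limits MonoidalCategory

universe v u

variable {C : Type u} [Category.{v} C] [MonoidalCategory C]

/-- The pushout product `f □ g : (A ⊗ Y) ⊔_{A ⊗ B} (X ⊗ B) ⟶ X ⊗ Y` of two
morphisms `f : A ⟶ X` and `g : B ⟶ Y` in a monoidal category. -/
noncomputable def pushoutProd {A X B Y : C} (f : A ⟶ X) (g : B ⟶ Y)
    [HasPushout (A ◁ g) (f ▷ B)] :
    pushout (A ◁ g) (f ▷ B) ⟶ X ⊗ Y :=
  pushout.desc (f ▷ Y) (X ◁ g) (whisker_exchange f g)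

namespace CategoryTheory.Functor.PushoutObjObj

variable {C₁ C₂ C₃ : Type*} [Category* C₁] [Category* C₂] [Category* C₃] {F : C₁ ⥤ C₂ ⥤ C₃}

theorem isPushout_ι_of_isPushout_left {X₁ Y₁ X₁' Y₁' : C₁} {f₁ : X₁ ⟶ Y₁} {f₁' : X₁' ⟶ Y₁'}
    {a : X₁ ⟶ X₁'} {b : Y₁ ⟶ Y₁'} {X₂ Y₂ : C₂} {f₂ : X₂ ⟶ Y₂}
    (sq : F.PushoutObjObj f₁ f₂) (sq' : F.PushoutObjObj f₁' f₂)
    (hX₂ : IsPushout ((F.map f₁).app X₂) ((F.map a).app X₂) ((F.map b).app X₂)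
      ((F.map f₁').app X₂))
    (hY₂ : IsPushout ((F.map f₁).app Y₂) ((F.map a).app Y₂) ((F.map b).app Y₂)
      ((F.map f₁').app Y₂))
    {q : sq.pt ⟶ sq'.pt} (hl : sq.inl ≫ q = (F.map b).app X₂ ≫ sq'.inl)
    (hr : sq.inr ≫ q = (F.map a).app Y₂ ≫ sq'.inr) :
    IsPushout sq.ι q ((F.map b).app Y₂) sq'.ι := by
  have hinr : IsPushout ((F.map a).app Y₂) sq.inr sq'.inr q := by
    refine IsPushout.of_left ?_ hr.symm sq.isPushout.flip
    rw [hl, NatTrans.naturality]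
    exact hX₂.flip.paste_horiz sq'.isPushout.flip
  refine IsPushout.of_left ?_ ?_ hinr.flip
  · simpa using hY₂
  · ext
    · simp [reassoc_of% hl]
    · simpa [reassoc_of% hr] using hY₂.w

theorem isPushout_ι_of_isPushout_right {X₁ Y₁ : C₁} {f₁ : X₁ ⟶ Y₁} {X₂ Y₂ X₂' Y₂' : C₂}
    {f₂ : X₂ ⟶ Y₂} {f₂' : X₂' ⟶ Y₂'} {a : X₂ ⟶ X₂'} {b : Y₂ ⟶ Y₂'}
    (sq : F.PushoutObjObj f₁ f₂) (sq' : F.PushoutObjObj f₁ f₂')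
    (hX₁ : IsPushout ((F.obj X₁).map f₂) ((F.obj X₁).map a) ((F.obj X₁).map b)
      ((F.obj X₁).map f₂'))
    (hY₁ : IsPushout ((F.obj Y₁).map f₂) ((F.obj Y₁).map a) ((F.obj Y₁).map b)
      ((F.obj Y₁).map f₂'))
    {q : sq.pt ⟶ sq'.pt} (hl : sq.inl ≫ q = (F.obj Y₁).map a ≫ sq'.inl)
    (hr : sq.inr ≫ q = (F.obj X₁).map b ≫ sq'.inr) :
    IsPushout sq.ι q ((F.obj Y₁).map b) sq'.ι :=
  isPushout_ι_of_isPushout_left (F := F.flip) sq.flip sq'.flip hX₁ hY₁ hr hl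

end CategoryTheory.Functor.PushoutObjObj

/-- `pushout (A ◁ g) (f ▷ B)` lists its legs in the opposite order to `PushoutObjObj`. -/
noncomputable def pushoutProdObjObj {A X B Y : C} (f : A ⟶ X) (g : B ⟶ Y)
    [HasPushout (A ◁ g) (f ▷ B)] : (curriedTensor C).PushoutObjObj f g where
  pt := pushout (A ◁ g) (f ▷ B)
  inl := pushout.inr _ _
  inr := pushout.inl _ _
  isPushout := (IsPushout.of_hasPushout (A ◁ g) (f ▷ B)).flip
  ι := pushoutProd f g
  inl_ι := pushout.inr_desc ..
  inr_ι := pushout.inl_desc ..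

/-- In a closed symmetric monoidal category with pushouts, the
row-wise pushout product of two pushout squares is again a pushout square. -/
theorem stmt10 [SymmetricCategory C] [MonoidalClosed C] [HasPushouts C]
    {Ab Xb Af Xf Bb Yb Bf Yf : C}
    (gb : Ab ⟶ Xb) (gf : Af ⟶ Xf) (av : Ab ⟶ Af) (xv : Xb ⟶ Xf)
    (hb : Bb ⟶ Yb) (hf : Bf ⟶ Yf) (bv : Bb ⟶ Bf) (yv : Yb ⟶ Yf)
    (sq₁ : IsPushout gb av xv gf) (sq₂ : IsPushout hb bv yv hf)
    (q : pushout (Ab ◁ hb) (gb ▷ Bb) ⟶ pushout (Af ◁ hf) (gf ▷ Bf))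
    (hq₁ : pushout.inl (Ab ◁ hb) (gb ▷ Bb) ≫ q =
      (av ⊗ₘ yv) ≫ pushout.inl (Af ◁ hf) (gf ▷ Bf))
    (hq₂ : pushout.inr (Ab ◁ hb) (gb ▷ Bb) ≫ q =
      (xv ⊗ₘ bv) ≫ pushout.inr (Af ◁ hf) (gf ▷ Bf)) :
    IsPushout (pushoutProd gb hb) q (xv ⊗ₘ yv) (pushoutProd gf hf) := by
  let q₁ := pushout.map (Ab ◁ hb) (gb ▷ Bb) (Af ◁ hb) (gf ▷ Bb) (av ▷ Yb) (xv ▷ Bb) (av ▷ Bb)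
    (whisker_exchange _ _) (by simp only [← comp_whiskerRight, sq₁.w])
  let q₂ := pushout.map (Af ◁ hb) (gf ▷ Bb) (Af ◁ hf) (gf ▷ Bf) (Af ◁ yv) (Xf ◁ bv) (Af ◁ bv)
    (by simp only [← whiskerLeft_comp, sq₂.w]) (whisker_exchange _ _).symm
  have change_g : IsPushout (pushoutProd gb hb) q₁ (xv ▷ Yb) (pushoutProd gf hb) :=
    (pushoutProdObjObj gb hb).isPushout_ι_of_isPushout_left (pushoutProdObjObj gf hb)
      (sq₁.map (tensorRight Bb)) (sq₁.map (tensorRight Yb)) (pushout.inr_desc ..)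
      (pushout.inl_desc ..)
  have change_h : IsPushout (pushoutProd gf hb) q₂ (Xf ◁ yv) (pushoutProd gf hf) :=
    (pushoutProdObjObj gf hb).isPushout_ι_of_isPushout_right (pushoutProdObjObj gf hf)
      (sq₂.map (tensorLeft Af)) (sq₂.map (tensorLeft Xf)) (pushout.inr_desc ..)
      (pushout.inl_desc ..)
  have hq : q = q₁ ≫ q₂ := by
    ext
    · rw [hq₁, pushout.inl_desc_assoc, Category.assoc, pushout.inl_desc, MonoidalCategory.tensorHom_def,
        Category.assoc]
    · rw [hq₂, pushout.inr_desc_assoc, Category.assoc, pushout.inr_desc, MonoidalCategory.tensorHom_def,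
        Category.assoc]
  rw [hq, MonoidalCategory.tensorHom_def]
  exact change_g.paste_vert change_h
end
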